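/- Consider the time-varying MPC setup: fix real matrices A (n×n), B (n×m), a horizon T ≥ 1, a real δ ∈ [0,1), and sequences (Q_t)_{t∈ℕ} of symmetric positive definite n×n matrices and (R_t)_{t∈ℕ} of symmetric positive definite m×m matrices satisfying (1−δ)Q_t ⪯ Q_{t+1} ⪯ (1+δ)Q_t and (1−δ)R_t ⪯ R_{t+1} ⪯ (1+δ)R_t for all t. For weights (Q,R) let P_k(Q,R) be the Riccati iterates with P_0 = 0 and P_{k+1} = AᵀP_kA − AᵀP_kB(BᵀP_kB+R)⁻¹BᵀP_kA + Q, and let the MPC closed-loop trajectory from x_0 be x_{t+1} = Ax_t + Bû_t with û_t = −(BᵀP_{T−1}(Q_t,R_t)B+R_t)⁻¹BᵀP_{T−1}(Q_t,R_t)A x_t. Suppose ρ ∈ (0,1) satisfies ρ·P_T(Q_t,R_t) ⪯ Q_t for all t, α > 1 satisfies P_T(Q_t,R_t) ⪯ α·P_{T−1}(Q_t,R_t) for all t, and that γ = (1−ρ)α/(1−δ) < 1. Suppose moreover there is a symmetric positive definite matrix Q̲ with Q̲ ⪯ Q_t for all t. Then the MPC closed-loop trajectory converges to the origin: x_t → 0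 as t → ∞. -/

import Mathlib

/-!
The MPC value `V t = x tᵀ P_T(Q_t, R_t) x t` is a Lyapunov function. Completing the square shows
that `xᵀ P_{k+1} x` is the minimum over `u` of the stage cost `xᵀQx + uᵀRu` plus the cost-to-go
`(Ax + Bu)ᵀ P_k (Ax + Bu)`, attained at the MPC feedback. Along the closed loop this gives
`x_{t+1}ᵀ P_{T-1}(Q_t, R_t) x_{t+1} ≤ (1 - ρ) V t`; passing to the weights of time `t + 1` costs at
most a factor `1 + δ`, and `P_T ⪯ α P_{T-1}`, so `V (t + 1) ≤ α (1 + δ) (1 - ρ) V t ≤ γ V t`.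
Finally `Q̲ ⪯ Q_t ⪯ P_T(Q_t, R_t)` with `Q̲` positive definite turns the geometric decay of `V`
into `x t → 0`.
-/

open Matrix

/-- The finite-horizon Riccati iteration with `P 0 = 0` and
`P (k+1) = AᵀP_kA − AᵀP_kB(BᵀP_kB+R)⁻¹BᵀP_kA + Q`. -/
noncomputable def riccati {n m : ℕ} (A : Matrix (Fin n) (Fin n) ℝ)
    (B : Matrix (Fin n) (Fin m) ℝ) (Q : Matrix (Fin n) (Fin n) ℝ)
    (R : Matrix (Fin m) (Fin m) ℝ) : ℕ → Matrix (Fin n) (Fin n) ℝ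
  | 0 => 0
  | k + 1 =>
      Aᵀ * riccati A B Q R k * A -
        Aᵀ * riccati A B Q R k * B * (Bᵀ * riccati A B Q R k * B + R)⁻¹ *
          Bᵀ * riccati A B Q R k * A + Q

/-- The Loewner order on real square matrices: `X ⪯ Y` iff `Y − X` is positive semidefinite. -/
def loewnerLE {n : ℕ} (X Y : Matrix (Fin n) (Fin n) ℝ) : Prop := (Y - X).PosSemidef

open Filter Topology

namespace Matrix

variable {ι κ : Type*} [Fintype ι] [Fintype κ]

lemma PosSemidef.dotProduct_mulVec_nonneg' {M : Matrix ι ι ℝ} (hM : M.PosSemidef) (x : ι → ℝ) :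
    0 ≤ x ⬝ᵥ (M *ᵥ x) := by
  simpa only [star_trivial] using hM.dotProduct_mulVec_nonneg x

lemma IsHermitian.dotProduct_mulVec_comm {M : Matrix ι ι ℝ} (hM : M.IsHermitian) (x y : ι → ℝ) :
    x ⬝ᵥ (M *ᵥ y) = y ⬝ᵥ (M *ᵥ x) := by
  rw [dotProduct_mulVec, ← mulVec_transpose, ← conjTranspose_eq_transpose_of_trivial, hM,
    dotProduct_comm]

lemma posDef_transpose_mul_mul_add {P : Matrix ι ι ℝ} {R : Matrix κ κ ℝ} (B : Matrix ι κ ℝ)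
    (hP : P.PosSemidef) (hR : R.PosDef) : (Bᵀ * P * B + R).PosDef :=
  PosDef.posSemidef_add
    (by simpa only [conjTranspose_eq_transpose_of_trivial] using hP.conjTranspose_mul_mul_same B) hR

lemma PosDef.exists_pos_mul_sq_norm_le {M : Matrix ι ι ℝ} (hM : M.PosDef) :
    ∃ c > 0, ∀ x, c * ‖x‖ ^ 2 ≤ x ⬝ᵥ (M *ᵥ x) := by
  have hcont : Continuous fun x : ι → ℝ => x ⬝ᵥ (M *ᵥ x) :=
    continuous_id.dotProduct (continuous_const.matrix_mulVec continuous_id)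
  obtain ⟨c, hc, hmin⟩ := (isCompact_sphere (0 : ι → ℝ) 1).exists_forall_le' hcont.continuousOn
    fun y hy => by
      simpa only [star_trivial] using hM.dotProduct_mulVec_pos (ne_zero_of_mem_unit_sphere ⟨y, hy⟩)
  refine ⟨c, hc, fun x => ?_⟩
  rcases eq_or_ne x 0 with rfl | hx0
  · simp
  have hx : 0 < ‖x‖ := norm_pos_iff.2 hx0
  have hunit := hmin (‖x‖⁻¹ • x) (by simp [norm_smul, hx.ne'])
  rw [mulVec_smul, dotProduct_smul, smul_dotProduct, smul_eq_mul, smul_eq_mul, ← mul_assoc]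
    at hunit
  calc c * ‖x‖ ^ 2 ≤ ‖x‖⁻¹ * ‖x‖⁻¹ * (x ⬝ᵥ (M *ᵥ x)) * ‖x‖ ^ 2 := by gcongr
    _ = x ⬝ᵥ (M *ᵥ x) := by field_simp

lemma PosDef.tendsto_zero_of_tendsto_dotProduct_mulVec {α : Type*} {l : Filter α}
    {M : Matrix ι ι ℝ} (hM : M.PosDef) {x : α → ι → ℝ}
    (h : Tendsto (fun a => x a ⬝ᵥ (M *ᵥ x a)) l (𝓝 0)) :
    Tendsto x l (𝓝 0) := by
  obtain ⟨c, hc, hcoer⟩ := hM.exists_pos_mul_sq_norm_le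
  have hsq : Tendsto (fun a => ‖x a‖ ^ 2) l (𝓝 0) :=
    squeeze_zero (fun _ => by positivity) (fun a => (le_div_iff₀' hc).2 (hcoer (x a)))
      (by simpa using h.div_const c)
  rw [tendsto_zero_iff_norm_tendsto_zero]
  simpa [Real.sqrt_sq (norm_nonneg _)] using hsq.sqrt

end Matrix

section RiccatiStep

variable {ι κ : Type*} [Fintype ι] [Fintype κ] [DecidableEq κ]
  (A : Matrix ι ι ℝ) (B : Matrix ι κ ℝ)

/-- The MPC control law is `û_t = -riccatiGain A B R_t P_{T-1} x_t`. -/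
noncomputable def riccatiGain (R : Matrix κ κ ℝ) (P : Matrix ι ι ℝ) : Matrix κ ι ℝ :=
  (Bᵀ * P * B + R)⁻¹ * Bᵀ * P * A

noncomputable def riccatiStep (Q : Matrix ι ι ℝ) (R : Matrix κ κ ℝ) (P : Matrix ι ι ℝ) :
    Matrix ι ι ℝ :=
  Aᵀ * P * A - Aᵀ * P * B * (Bᵀ * P * B + R)⁻¹ * Bᵀ * P * A + Q

variable {Q P : Matrix ι ι ℝ} {R : Matrix κ κ ℝ}

lemma riccatiStep_eq_sub_transpose_mul_gain (hP : P.IsHermitian) :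
    riccatiStep A B Q R P = Aᵀ * P * A - (Bᵀ * P * A)ᵀ * riccatiGain A B R P + Q := by
  have hPT : Pᵀ = P := (isHermitian_iff_isSymm.mp hP).eq
  simp only [riccatiStep, riccatiGain, transpose_mul, hPT, transpose_transpose, Matrix.mul_assoc]

lemma dotProduct_riccatiStep_mulVec_add (hP : P.IsHermitian) (hR : R.IsHermitian)
    (hS : IsUnit (Bᵀ * P * B + R).det) (x : ι → ℝ) (u : κ → ℝ) :
    x ⬝ᵥ (riccatiStep A B Q R P *ᵥ x) + (u + riccatiGain A B R P *ᵥ x) ⬝ᵥ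
        ((Bᵀ * P * B + R) *ᵥ (u + riccatiGain A B R P *ᵥ x)) =
      x ⬝ᵥ (Q *ᵥ x) + u ⬝ᵥ (R *ᵥ u) + (A *ᵥ x + B *ᵥ u) ⬝ᵥ (P *ᵥ (A *ᵥ x + B *ᵥ u)) := by
  rw [riccatiStep_eq_sub_transpose_mul_gain A B hP]
  set S := Bᵀ * P * B + R
  set K := riccatiGain A B R P
  have hSK : S * K = Bᵀ * P * A := by
    rw [show K = S⁻¹ * (Bᵀ * P * A) by simp only [K, S, riccatiGain, Matrix.mul_assoc],
      mul_nonsing_inv_cancel_left _ _ hS]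
  have hS_herm : S.IsHermitian := (isHermitian_conjTranspose_mul_mul B hP).add hR
  rw [← hSK]
  simp only [sub_mulVec, add_mulVec, mulVec_add, dotProduct_add, add_dotProduct, dotProduct_sub,
    ← mulVec_mulVec, dotProduct_transpose_mulVec]
  have hcross : u ⬝ᵥ (S *ᵥ (K *ᵥ x)) = (B *ᵥ u) ⬝ᵥ (P *ᵥ (A *ᵥ x)) := by
    rw [mulVec_mulVec, hSK, ← mulVec_mulVec, ← mulVec_mulVec, dotProduct_transpose_mulVec,
      dotProduct_comm]
  have hSu : u ⬝ᵥ (S *ᵥ u) = (B *ᵥ u) ⬝ᵥ (P *ᵥ (B *ᵥ u)) + u ⬝ᵥ (R *ᵥ u) := by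
    rw [add_mulVec, dotProduct_add, ← mulVec_mulVec, ← mulVec_mulVec, dotProduct_transpose_mulVec,
      dotProduct_comm]
  rw [hS_herm.dotProduct_mulVec_comm (K *ᵥ x) u, hcross, hSu, dotProduct_comm (P *ᵥ _),
    hP.dotProduct_mulVec_comm (A *ᵥ x) (B *ᵥ u)]
  ring

lemma isHermitian_riccatiStep (hQ : Q.IsHermitian) (hR : R.IsHermitian) (hP : P.IsHermitian) :
    (riccatiStep A B Q R P).IsHermitian := by
  have hPT : Pᵀ = P := (isHermitian_iff_isSymm.mp hP).eq
  have hS : (Bᵀ * P * B + R).IsHermitian := (isHermitian_conjTranspose_mul_mul B hP).add hR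
  have h : riccatiStep A B Q R P =
      Aᴴ * P * A - (Bᵀ * P * A)ᴴ * (Bᵀ * P * B + R)⁻¹ * (Bᵀ * P * A) + Q := by
    simp only [riccatiStep, conjTranspose_eq_transpose_of_trivial, transpose_mul, hPT,
      transpose_transpose, Matrix.mul_assoc]
  rw [h]
  exact ((isHermitian_conjTranspose_mul_mul A hP).sub
    (isHermitian_conjTranspose_mul_mul _ hS.inv)).add hQ

lemma dotProduct_riccatiStep_mulVec_le (hP : P.PosSemidef) (hR : R.PosDef) (x : ι → ℝ)
    (u : κ → ℝ) :
    x ⬝ᵥ (riccatiStep A B Q R P *ᵥ x) ≤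
      x ⬝ᵥ (Q *ᵥ x) + u ⬝ᵥ (R *ᵥ u) + (A *ᵥ x + B *ᵥ u) ⬝ᵥ (P *ᵥ (A *ᵥ x + B *ᵥ u)) := by
  have hS := posDef_transpose_mul_mul_add hP hR (B := B)
  rw [← dotProduct_riccatiStep_mulVec_add A B hP.isHermitian hR.isHermitian
    ((isUnit_iff_isUnit_det _).mp hS.isUnit)]
  exact le_add_of_nonneg_right (hS.posSemidef.dotProduct_mulVec_nonneg' _)

lemma dotProduct_riccatiStep_mulVec_eq (hP : P.PosSemidef) (hR : R.PosDef) (x : ι → ℝ) :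
    x ⬝ᵥ (riccatiStep A B Q R P *ᵥ x) =
      x ⬝ᵥ (Q *ᵥ x) + (-(riccatiGain A B R P *ᵥ x)) ⬝ᵥ (R *ᵥ -(riccatiGain A B R P *ᵥ x)) +
        (A *ᵥ x + B *ᵥ -(riccatiGain A B R P *ᵥ x)) ⬝ᵥ
          (P *ᵥ (A *ᵥ x + B *ᵥ -(riccatiGain A B R P *ᵥ x))) := by
  have hS := posDef_transpose_mul_mul_add hP hR (B := B)
  rw [← dotProduct_riccatiStep_mulVec_add A B hP.isHermitian hR.isHermitian
    ((isUnit_iff_isUnit_det _).mp hS.isUnit), neg_add_cancel, mulVec_zero, dotProduct_zero,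
    add_zero]

end RiccatiStep

lemma loewnerLE.dotProduct_mulVec_le {n : ℕ} {X Y : Matrix (Fin n) (Fin n) ℝ}
    (h : loewnerLE X Y) (x : Fin n → ℝ) : x ⬝ᵥ (X *ᵥ x) ≤ x ⬝ᵥ (Y *ᵥ x) := by
  have := h.dotProduct_mulVec_nonneg' x
  rw [sub_mulVec, dotProduct_sub] at this
  linarith

lemma loewnerLE_of_dotProduct_mulVec_le {n : ℕ} {X Y : Matrix (Fin n) (Fin n) ℝ}
    (hX : X.IsHermitian) (hY : Y.IsHermitian) (h : ∀ x, x ⬝ᵥ (X *ᵥ x) ≤ x ⬝ᵥ (Y *ᵥ x)) :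
    loewnerLE X Y :=
  PosSemidef.of_dotProduct_mulVec_nonneg (hY.sub hX) fun x => by
    simpa only [star_trivial, sub_mulVec, dotProduct_sub, sub_nonneg] using h x

lemma dotProduct_smul_mulVec {ι : Type*} [Fintype ι] (c : ℝ) (M : Matrix ι ι ℝ) (x : ι → ℝ) :
    x ⬝ᵥ ((c • M) *ᵥ x) = c * (x ⬝ᵥ (M *ᵥ x)) := by
  rw [smul_mulVec, dotProduct_smul, smul_eq_mul]

section Riccati

variable {n m : ℕ} (A : Matrix (Fin n) (Fin n) ℝ) (B : Matrix (Fin n) (Fin m) ℝ)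
  {Q Q' : Matrix (Fin n) (Fin n) ℝ} {R R' : Matrix (Fin m) (Fin m) ℝ}

lemma riccati_succ (k : ℕ) :
    riccati A B Q R (k + 1) = riccatiStep A B Q R (riccati A B Q R k) := rfl

lemma riccati_posSemidef (hQ : Q.PosSemidef) (hR : R.PosDef) (k : ℕ) :
    (riccati A B Q R k).PosSemidef := by
  induction k with
  | zero => exact .zero
  | succ k ih =>
    refine .of_dotProduct_mulVec_nonneg
      (isHermitian_riccatiStep A B hQ.isHermitian hR.isHermitian ih.isHermitian) fun x => ?_
    rw [star_trivial, riccati_succ, dotProduct_riccatiStep_mulVec_eq A B ih hR]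
    exact add_nonneg (add_nonneg (hQ.dotProduct_mulVec_nonneg' _)
      (hR.posSemidef.dotProduct_mulVec_nonneg' _)) (ih.dotProduct_mulVec_nonneg' _)

lemma loewnerLE_riccati_succ (hQ : Q.PosSemidef) (hR : R.PosDef) (k : ℕ) :
    loewnerLE Q (riccati A B Q R (k + 1)) := by
  have hP := riccati_posSemidef A B hQ hR k
  refine loewnerLE_of_dotProduct_mulVec_le hQ.isHermitian
    (isHermitian_riccatiStep A B hQ.isHermitian hR.isHermitian hP.isHermitian) fun x => ?_
  rw [riccati_succ, dotProduct_riccatiStep_mulVec_eq A B hP hR]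
  exact le_add_of_le_of_nonneg (le_add_of_nonneg_right (hR.posSemidef.dotProduct_mulVec_nonneg' _))
    (hP.dotProduct_mulVec_nonneg' _)

lemma riccati_loewnerLE_smul (hQ : Q.PosSemidef) (hR : R.PosDef) (hQ' : Q'.PosSemidef)
    (hR' : R'.PosDef) {c : ℝ} (hQQ' : loewnerLE Q' (c • Q)) (hRR' : loewnerLE R' (c • R))
    (k : ℕ) : loewnerLE (riccati A B Q' R' k) (c • riccati A B Q R k) := by
  induction k with
  | zero => simpa [riccati, loewnerLE] using PosSemidef.zero
  | succ k ih =>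
    have hP := riccati_posSemidef A B hQ hR k
    have hP' := riccati_posSemidef A B hQ' hR' k
    refine loewnerLE_of_dotProduct_mulVec_le
      (isHermitian_riccatiStep A B hQ'.isHermitian hR'.isHermitian hP'.isHermitian)
      ((isHermitian_riccatiStep A B hQ.isHermitian hR.isHermitian hP.isHermitian).smul
        (IsSelfAdjoint.all c)) fun x => ?_
    set u := -(riccatiGain A B R (riccati A B Q R k) *ᵥ x)
    set z := A *ᵥ x + B *ᵥ u
    rw [riccati_succ, riccati_succ, dotProduct_smul_mulVec,
      dotProduct_riccatiStep_mulVec_eq A B hP hR]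
    have hQx := hQQ'.dotProduct_mulVec_le x
    have hRu := hRR'.dotProduct_mulVec_le u
    have hPz := ih.dotProduct_mulVec_le z
    rw [dotProduct_smul_mulVec] at hQx hRu hPz
    linarith [dotProduct_riccatiStep_mulVec_le A B (Q := Q') hP' hR' x u]

lemma dotProduct_riccati_mulVec_closedLoop_le (hQ : Q.PosSemidef) (hR : R.PosDef) {k : ℕ}
    {ρ : ℝ} (hρ : loewnerLE (ρ • riccati A B Q R (k + 1)) Q) {x x' : Fin n → ℝ} {u : Fin m → ℝ}
    (hu : u = -(riccatiGain A B R (riccati A B Q R k) *ᵥ x)) (hx' : x' = A *ᵥ x + B *ᵥ u) :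
    x' ⬝ᵥ (riccati A B Q R k *ᵥ x') ≤ (1 - ρ) * (x ⬝ᵥ (riccati A B Q R (k + 1) *ᵥ x)) := by
  have hP := riccati_posSemidef A B hQ hR k
  have hsplit := dotProduct_riccatiStep_mulVec_eq A B (Q := Q) hP hR x
  rw [← riccati_succ, ← hu, ← hx'] at hsplit
  have hQx := hρ.dotProduct_mulVec_le x
  rw [dotProduct_smul_mulVec] at hQx
  linarith [hR.posSemidef.dotProduct_mulVec_nonneg' u]

lemma dotProduct_riccati_mulVec_closedLoop_succ_le (hQ : Q.PosSemidef) (hR : R.PosDef)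
    (hQ' : Q'.PosSemidef) (hR' : R'.PosDef) {k : ℕ} {ρ c α : ℝ} (hc : 0 ≤ c) (hα : 0 ≤ α)
    (hρ : loewnerLE (ρ • riccati A B Q R (k + 1)) Q) (hQQ' : loewnerLE Q' (c • Q))
    (hRR' : loewnerLE R' (c • R))
    (hαP : loewnerLE (riccati A B Q' R' (k + 1)) (α • riccati A B Q' R' k))
    {x x' : Fin n → ℝ} {u : Fin m → ℝ}
    (hu : u = -(riccatiGain A B R (riccati A B Q R k) *ᵥ x)) (hx' : x' = A *ᵥ x + B *ᵥ u) :
    x' ⬝ᵥ (riccati A B Q' R' (k + 1) *ᵥ x') ≤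
      α * c * (1 - ρ) * (x ⬝ᵥ (riccati A B Q R (k + 1) *ᵥ x)) := by
  have hweights :=
    (riccati_loewnerLE_smul A B hQ hR hQ' hR' hQQ' hRR' k).dotProduct_mulVec_le x'
  have hhorizon := hαP.dotProduct_mulVec_le x'
  rw [dotProduct_smul_mulVec] at hweights hhorizon
  calc x' ⬝ᵥ (riccati A B Q' R' (k + 1) *ᵥ x')
      ≤ α * (c * (x' ⬝ᵥ (riccati A B Q R k *ᵥ x'))) := hhorizon.trans (by gcongr)
    _ ≤ α * (c * ((1 - ρ) * (x ⬝ᵥ (riccati A B Q R (k + 1) *ᵥ x)))) := by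
      gcongr; exact dotProduct_riccati_mulVec_closedLoop_le A B hQ hR hρ hu hx'
    _ = α * c * (1 - ρ) * (x ⬝ᵥ (riccati A B Q R (k + 1) *ᵥ x)) := by ring

end Riccati

theorem mpc_closed_loop_stable_general {n m : ℕ}
    (A : Matrix (Fin n) (Fin n) ℝ) (B : Matrix (Fin n) (Fin m) ℝ)
    (T : ℕ) (hT : 1 ≤ T) (δ : ℝ) (hδ0 : 0 ≤ δ) (hδ1 : δ < 1)
    (Q : ℕ → Matrix (Fin n) (Fin n) ℝ) (R : ℕ → Matrix (Fin m) (Fin m) ℝ)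
    (hQpd : ∀ t, (Q t).PosDef) (hRpd : ∀ t, (R t).PosDef)
    (hQhigh : ∀ t, loewnerLE (Q (t + 1)) ((1 + δ) • Q t))
    (hRhigh : ∀ t, loewnerLE (R (t + 1)) ((1 + δ) • R t))
    (x : ℕ → Fin n → ℝ) (u : ℕ → Fin m → ℝ)
    (hu : ∀ t, u t = -(((Bᵀ * riccati A B (Q t) (R t) (T - 1) * B + R t)⁻¹ *
        Bᵀ * riccati A B (Q t) (R t) (T - 1) * A) *ᵥ x t))
    (hx : ∀ t, x (t + 1) = A *ᵥ x t + B *ᵥ u t)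
    (ρ : ℝ) (hρ1 : ρ < 1)
    (hρP : ∀ t, loewnerLE (ρ • riccati A B (Q t) (R t) T) (Q t))
    (α : ℝ) (hα : 1 < α)
    (hαP : ∀ t, loewnerLE (riccati A B (Q t) (R t) T)
      (α • riccati A B (Q t) (R t) (T - 1)))
    (γ : ℝ) (hγ : γ = (1 - ρ) * α / (1 - δ)) (hγ1 : γ < 1)
    (Qlb : Matrix (Fin n) (Fin n) ℝ) (hQlb : Qlb.PosDef)
    (hlb : ∀ t, loewnerLE Qlb (Q t)) :
    Filter.Tendsto x Filter.atTop (nhds 0) := by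
  obtain ⟨k, rfl⟩ : ∃ k, T = k + 1 := ⟨T - 1, by omega⟩
  rw [Nat.add_sub_cancel] at hu hαP
  set V : ℕ → ℝ := fun t => x t ⬝ᵥ (riccati A B (Q t) (R t) (k + 1) *ᵥ x t)
  have hV : ∀ t, 0 ≤ V t := fun t =>
    (riccati_posSemidef A B (hQpd t).posSemidef (hRpd t) _).dotProduct_mulVec_nonneg' (x t)
  have hrate : α * (1 + δ) * (1 - ρ) ≤ γ := by
    have hα1ρ : 0 ≤ α * (1 - ρ) := mul_nonneg (by linarith) (by linarith)
    rw [hγ, le_div_iff₀ (by linarith)]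
    -- `(1 + δ) (1 - δ) = 1 - δ ^ 2 ≤ 1`
    nlinarith [mul_nonneg hα1ρ (sq_nonneg δ)]
  have hdecay : ∀ t, V (t + 1) ≤ γ * V t := fun t =>
    (dotProduct_riccati_mulVec_closedLoop_succ_le A B (hQpd t).posSemidef (hRpd t)
      (hQpd (t + 1)).posSemidef (hRpd (t + 1)) (by linarith) (by linarith) (hρP t) (hQhigh t)
      (hRhigh t) (hαP (t + 1)) (hu t) (hx t)).trans (by gcongr; exact hV t)
  have hγ0 : 0 ≤ γ := hγ ▸ div_nonneg (mul_nonneg (by linarith) (by linarith)) (by linarith)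
  refine hQlb.tendsto_zero_of_tendsto_dotProduct_mulVec (squeeze_zero
    (fun t => hQlb.posSemidef.dotProduct_mulVec_nonneg' (x t)) (fun t => ?_)
    (by simpa using (tendsto_pow_atTop_nhds_zero_of_lt_one hγ0 hγ1).mul_const (V 0)))
  calc x t ⬝ᵥ (Qlb *ᵥ x t) ≤ x t ⬝ᵥ (Q t *ᵥ x t) := (hlb t).dotProduct_mulVec_le (x t)
    _ ≤ V t :=
      (loewnerLE_riccati_succ A B (hQpd t).posSemidef (hRpd t) k).dotProduct_mulVec_le (x t)
    _ ≤ γ ^ t * V 0 := le_geom hγ0 t fun i _ => hdecay i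

/-- Appendix Lemma 2(b): if the contraction factor `γ = (1−ρ)α/(1−δ)` is less than 1 and
the weights are uniformly bounded below, the MPC closed loop converges to the origin. -/
theorem mpc_closed_loop_stable {n m : ℕ}
    (A : Matrix (Fin n) (Fin n) ℝ) (B : Matrix (Fin n) (Fin m) ℝ)
    (T : ℕ) (hT : 1 ≤ T) (δ : ℝ) (hδ0 : 0 ≤ δ) (hδ1 : δ < 1)
    (Q : ℕ → Matrix (Fin n) (Fin n) ℝ) (R : ℕ → Matrix (Fin m) (Fin m) ℝ)
    (hQpd : ∀ t, (Q t).PosDef) (hRpd : ∀ t, (R t).PosDef)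
    (hQlow : ∀ t, loewnerLE ((1 - δ) • Q t) (Q (t + 1)))
    (hQhigh : ∀ t, loewnerLE (Q (t + 1)) ((1 + δ) • Q t))
    (hRlow : ∀ t, loewnerLE ((1 - δ) • R t) (R (t + 1)))
    (hRhigh : ∀ t, loewnerLE (R (t + 1)) ((1 + δ) • R t))
    (x : ℕ → Fin n → ℝ) (u : ℕ → Fin m → ℝ)
    (hu : ∀ t, u t = -(((Bᵀ * riccati A B (Q t) (R t) (T - 1) * B + R t)⁻¹ *
        Bᵀ * riccati A B (Q t) (R t) (T - 1) * A) *ᵥ x t))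
    (hx : ∀ t, x (t + 1) = A *ᵥ x t + B *ᵥ u t)
    (ρ : ℝ) (hρ0 : 0 < ρ) (hρ1 : ρ < 1)
    (hρP : ∀ t, loewnerLE (ρ • riccati A B (Q t) (R t) T) (Q t))
    (α : ℝ) (hα : 1 < α)
    (hαP : ∀ t, loewnerLE (riccati A B (Q t) (R t) T)
      (α • riccati A B (Q t) (R t) (T - 1)))
    (γ : ℝ) (hγ : γ = (1 - ρ) * α / (1 - δ)) (hγ1 : γ < 1)
    (Qlb : Matrix (Fin n) (Fin n) ℝ) (hQlb : Qlb.PosDef)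
    (hlb : ∀ t, loewnerLE Qlb (Q t)) :
    Filter.Tendsto x Filter.atTop (nhds 0) :=
  mpc_closed_loop_stable_general A B T hT δ hδ0 hδ1 Q R hQpd hRpd hQhigh hRhigh x u hu hx ρ hρ1 hρP
    α hα hαP γ hγ hγ1 Qlb hQlb hlb
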